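/- arXiv:2108.09831 — 2 statements merged into one kernel-verified Lean document; each statement's English description precedes it below -/
import Mathlib

section
/- For every pair of indices 1 ≤ k ≤ ℓ ≤ N there exists a unique ψ^{kℓ} ∈ Ṽ^N such that a(ψ^{kℓ}, η) = 0 for all η ∈ T_φ and (ψ^{kℓ}, φ^{ij})_H = δ_{ik}δ_{jℓ} for all 1 ≤ i ≤ j ≤ N. -/
open scoped RealInnerProductSpace

/-- Multiplication of a tuple by a matrix from the right: `(vS)_j = Σ_i S_{ij} v_i`. -/
def smulMat {N : ℕ} {V : Type*} [AddCommGroup V] [Module ℝ V]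
    (v : Fin N → V) (S : Matrix (Fin N) (Fin N) ℝ) : Fin N → V :=
  fun j => ∑ i, S i j • v i

/-- The normalized symmetric matrices `S^{ij}`: `S^{ii} = e_i e_iᵀ` and, for `i ≠ j`,
`S^{ij} = (e_i e_jᵀ + e_j e_iᵀ)/√2`. -/
noncomputable def SijMat {N : ℕ} (i j : Fin N) : Matrix (Fin N) (Fin N) ℝ :=
  if i = j then Matrix.single i i 1
  else (Real.sqrt 2)⁻¹ • (Matrix.single i j 1 + Matrix.single j i 1)

/-- The outer product of tuples in `Ṽ^N`, computed in `H₀` through the embedding `ι`. -/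
noncomputable def outerProdI {N : ℕ} {V H₀ : Type*} [NormedAddCommGroup V]
    [NormedAddCommGroup H₀] [InnerProductSpace ℝ H₀] [NormedSpace ℝ V]
    (ι : V →L[ℝ] H₀) (v w : Fin N → V) : Matrix (Fin N) (Fin N) ℝ :=
  Matrix.of fun i j => ⟪ι (v i), ι (w j)⟫

/-- The inner product `(v,w)_H = tr⟦v,w⟧`, computed in `H₀` through the embedding `ι`. -/
noncomputable def innerHI {N : ℕ} {V H₀ : Type*} [NormedAddCommGroup V]
    [NormedAddCommGroup H₀] [InnerProductSpace ℝ H₀] [NormedSpace ℝ V]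
    (ι : V →L[ℝ] H₀) (v w : Fin N → V) : ℝ :=
  ∑ j, ⟪ι (v j), ι (w j)⟫

/-! Pairing with `φ S^{ij}` reads off the entries of the symmetric part of `⟦ψ, φ⟧`, and the
`S^{ij}` (`i ≤ j`) are orthonormal for the Frobenius product. Hence the normalization
`(ψ, φ^{ij})_H = δ_{ik} δ_{jℓ}` says exactly that `ψ - φ S^{kℓ} ∈ T_φ`, and `ψ^{kℓ}` solves a
Galerkin problem on the affine space `φ S^{kℓ} + T_φ`: `a(ψ, η) = 0` for all `η ∈ T_φ`. Since
`T_φ` is closed in the Hilbert space `Ṽ^N`, Lax–Milgram on `T_φ` gives a solution, and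
coercivity of `a` makes it unique. -/

namespace IsCoercive

variable {X : Type*} [NormedAddCommGroup X] [InnerProductSpace ℝ X] {B : X →L[ℝ] X →L[ℝ] ℝ}

theorem bilinearComp_subtypeL (hB : IsCoercive B) (K : Submodule ℝ X) :
    IsCoercive (B.bilinearComp K.subtypeL K.subtypeL) := by
  obtain ⟨C, hC, h⟩ := hB
  exact ⟨C, hC, fun u => h u⟩

theorem eq_zero_of_apply_self_eq_zero (hB : IsCoercive B) {u : X} (hu : B u u = 0) : u = 0 := by
  obtain ⟨C, hC, h⟩ := hB
  have : C * ‖u‖ * ‖u‖ ≤ 0 := hu ▸ h u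
  rw [← norm_le_zero_iff]
  by_contra! hpos
  linarith [mul_pos (mul_pos hC hpos) hpos]

theorem exists_mem_forall_apply_eq (hB : IsCoercive B) (K : Submodule ℝ X) [CompleteSpace K]
    (v : X) : ∃ p ∈ K, ∀ η ∈ K, B p η = B v η := by
  -- Lax–Milgram on `K`, applied to the Riesz representative of `(B v)|_K`
  set e := (hB.bilinearComp_subtypeL K).continuousLinearEquivOfBilin
  let z : K := (InnerProductSpace.toDual ℝ K).symm ((B v).comp K.subtypeL)
  refine ⟨e.symm z, (e.symm z).2, fun η hη => ?_⟩
  have := (hB.bilinearComp_subtypeL K).continuousLinearEquivOfBilin_apply (e.symm z) ⟨η, hη⟩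
  simpa [e, z, InnerProductSpace.toDual_symm_apply] using this.symm

theorem existsUnique_sub_mem_forall_apply_eq_zero (hB : IsCoercive B) (K : Submodule ℝ X)
    [CompleteSpace K] (v : X) : ∃! ψ : X, ψ - v ∈ K ∧ ∀ η ∈ K, B ψ η = 0 := by
  obtain ⟨p, hpK, hp⟩ := hB.exists_mem_forall_apply_eq K v
  refine ⟨v - p, ⟨by simpa using K.neg_mem hpK, fun η hη => by simp [hp η hη]⟩, ?_⟩
  rintro ψ ⟨hψK, hψ⟩
  have hd : ψ - (v - p) ∈ K := by simpa [sub_add] using K.add_mem hψK hpK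
  refine sub_eq_zero.1 (hB.eq_zero_of_apply_self_eq_zero ?_)
  rw [map_sub B ψ, sub_apply, hψ _ hd, map_sub B v, sub_apply, hp _ hd, sub_self, sub_self]

end IsCoercive

open Matrix

namespace SijMat

variable {N : ℕ}

theorem trace_mul (i j : Fin N) (M : Matrix (Fin N) (Fin N) ℝ) :
    (SijMat i j * M).trace = if i = j then M i i else (√2)⁻¹ * (M j i + M i j) := by
  unfold SijMat
  split_ifs <;> simp [Matrix.add_mul, mul_add, trace_single_mul]

theorem trace_mul_SijMat {i j k ℓ : Fin N} (hij : i ≤ j) (hkl : k ≤ ℓ) :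
    (SijMat i j * SijMat k ℓ).trace = (if i = k then 1 else 0) * (if j = ℓ then 1 else 0) := by
  have h2 : (√2)⁻¹ * ((√2)⁻¹ + (√2)⁻¹) = (1 : ℝ) := by
    rw [← two_mul, mul_left_comm, ← mul_inv, Real.mul_self_sqrt zero_le_two,
      mul_inv_cancel₀ two_ne_zero]
  rw [trace_mul]
  rcases hij.eq_or_lt with rfl | hij <;> rcases hkl.eq_or_lt with rfl | hkl
  · by_cases h : i = k <;> simp [SijMat, h, eq_comm]
  · simp only [SijMat, hkl.ne, ↓reduceIte, Matrix.smul_apply, Matrix.add_apply, single_apply,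
      smul_eq_mul, mul_ite, mul_one, mul_zero]
    grind
  · simp only [SijMat, hij.ne, ↓reduceIte, single_apply, mul_ite, mul_one, mul_zero]
    grind
  · simp only [SijMat, hij.ne, hkl.ne, ↓reduceIte, Matrix.smul_apply, Matrix.add_apply,
      single_apply, smul_eq_mul, mul_ite, mul_one, mul_zero]
    grind

theorem forall_trace_mul_eq_zero_iff (M : Matrix (Fin N) (Fin N) ℝ) :
    (∀ i j, i ≤ j → (SijMat i j * M).trace = 0) ↔ M + Mᵀ = 0 := by
  simp only [trace_mul]
  constructor
  · intro h
    ext a b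
    simp only [Matrix.add_apply, transpose_apply, Matrix.zero_apply]
    rcases lt_trichotomy a b with hab | rfl | hab
    · simpa [hab.ne, add_comm] using h a b hab.le
    · simpa using h a a le_rfl
    · simpa [hab.ne] using h b a hab.le
  · intro h i j hij
    have hij' := congrFun (congrFun h i) j
    have hii := congrFun (congrFun h i) i
    simp only [Matrix.add_apply, transpose_apply, Matrix.zero_apply] at hij' hii
    split_ifs
    · linarith
    · rw [add_comm, hij', mul_zero]

theorem transpose (i j : Fin N) : (SijMat i j)ᵀ = SijMat i j := by
  unfold SijMat
  split_ifs <;> simp [Matrix.transpose_single, add_comm]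

end SijMat

section DiagBilin

variable {n V : Type*} [Fintype n] [NormedAddCommGroup V] [InnerProductSpace ℝ V]

noncomputable def diagBilin (A : V →L[ℝ] V →L[ℝ] ℝ) :
    (PiLp 2 fun _ : n => V) →L[ℝ] (PiLp 2 fun _ : n => V) →L[ℝ] ℝ :=
  ∑ j, A.bilinearComp (PiLp.proj 2 (fun _ : n => V) j) (PiLp.proj 2 (fun _ : n => V) j)

@[simp]
theorem diagBilin_apply (A : V →L[ℝ] V →L[ℝ] ℝ) (u w : PiLp 2 fun _ : n => V) :
    diagBilin A u w = ∑ j, A (u j) (w j) := by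
  simp [diagBilin]

theorem isCoercive_diagBilin {A : V →L[ℝ] V →L[ℝ] ℝ} (hA : IsCoercive A) :
    IsCoercive (diagBilin (n := n) A) := by
  obtain ⟨C, hC, h⟩ := hA
  refine ⟨C, hC, fun u => ?_⟩
  calc C * ‖u‖ * ‖u‖ = ∑ j, C * ‖u j‖ * ‖u j‖ := by
        simp only [mul_assoc, ← Finset.mul_sum, ← sq, PiLp.norm_sq_eq_of_L2]
    _ ≤ diagBilin A u u := by
        rw [diagBilin_apply]
        exact Finset.sum_le_sum fun j _ => h (u j)

end DiagBilin

section Frames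

variable {N : ℕ} {V H₀ : Type*} [NormedAddCommGroup V] [InnerProductSpace ℝ V]
  [NormedAddCommGroup H₀] [InnerProductSpace ℝ H₀] (ι : V →L[ℝ] H₀)

theorem outerProdI_transpose (v w : Fin N → V) : (outerProdI ι v w)ᵀ = outerProdI ι w v := by
  ext a b
  exact real_inner_comm _ _

theorem outerProdI_sub_left (u v w : Fin N → V) :
    outerProdI ι (u - v) w = outerProdI ι u w - outerProdI ι v w := by
  ext a b
  simp [outerProdI, inner_sub_left]

theorem outerProdI_smulMat_left (v w : Fin N → V) (S : Matrix (Fin N) (Fin N) ℝ) :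
    outerProdI ι (smulMat v S) w = Sᵀ * outerProdI ι v w := by
  ext a b
  simp [outerProdI, smulMat, Matrix.mul_apply, sum_inner, real_inner_smul_left]

theorem innerHI_smulMat (w φ : Fin N → V) (S : Matrix (Fin N) (Fin N) ℝ) :
    innerHI ι w (smulMat φ S) = (S * outerProdI ι w φ).trace := by
  simp only [innerHI, smulMat, map_sum, map_smul, inner_sum, real_inner_smul_right, trace,
    outerProdI, diag_apply, Matrix.mul_apply, of_apply]
  exact Finset.sum_comm

/-- `T_φ`, placed in `PiLp 2`: the sup-normed `Fin N → V` is not an inner product space. -/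
def tangentSpace (φ : Fin N → V) : Submodule ℝ (PiLp 2 fun _ : Fin N => V) where
  carrier := {η | outerProdI ι η.ofLp φ + outerProdI ι φ η.ofLp = 0}
  add_mem' {a b} ha hb := by
    ext i j
    have hai := congr_fun₂ ha i j
    have hbi := congr_fun₂ hb i j
    simp only [outerProdI, Matrix.add_apply, Matrix.of_apply, Matrix.zero_apply] at *
    simp only [WithLp.ofLp_add, Pi.add_apply, map_add, inner_add_left, inner_add_right]
    linarith
  zero_mem' := by
    ext i j
    simp [outerProdI]
  smul_mem' c a ha := by
    ext i j
    have hai := congr_fun₂ ha i j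
    simp only [outerProdI, Matrix.add_apply, Matrix.of_apply, Matrix.zero_apply] at *
    simp only [WithLp.ofLp_smul, Pi.smul_apply, map_smul, real_inner_smul_left,
      real_inner_smul_right, ← mul_add, hai, mul_zero]

theorem mem_tangentSpace_iff (φ : Fin N → V) (η : PiLp 2 fun _ : Fin N => V) :
    η ∈ tangentSpace ι φ ↔ outerProdI ι η.ofLp φ + outerProdI ι φ η.ofLp = 0 :=
  Iff.rfl

theorem isClosed_tangentSpace (φ : Fin N → V) :
    IsClosed (tangentSpace ι φ : Set (PiLp 2 fun _ : Fin N => V)) := by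
  refine isClosed_eq (continuous_matrix fun a b => ?_) continuous_const
  simp only [outerProdI, Matrix.add_apply, Matrix.of_apply]
  fun_prop

theorem forall_innerHI_SijMat_iff_sub_mem_tangentSpace {φ : Fin N → V}
    (hφ : outerProdI ι φ φ = 1) {k ℓ : Fin N} (hkl : k ≤ ℓ) (ψ : Fin N → V) :
    (∀ i j, i ≤ j → innerHI ι ψ (smulMat φ (SijMat i j)) =
        (if i = k then (1 : ℝ) else 0) * (if j = ℓ then (1 : ℝ) else 0)) ↔
      WithLp.toLp 2 ψ - WithLp.toLp 2 (smulMat φ (SijMat k ℓ)) ∈ tangentSpace ι φ := by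
  rw [mem_tangentSpace_iff, ← WithLp.toLp_sub, WithLp.ofLp_toLp, ← outerProdI_transpose ι _ φ,
    ← SijMat.forall_trace_mul_eq_zero_iff, outerProdI_sub_left, outerProdI_smulMat_left, hφ,
    Matrix.mul_one, SijMat.transpose]
  refine forall₃_congr fun i j hij => ?_
  rw [innerHI_smulMat, Matrix.mul_sub, Matrix.trace_sub, SijMat.trace_mul_SijMat hij hkl,
    sub_eq_zero]

end Frames

theorem existsUnique_psi_kl_general {N : ℕ}
    {V H₀ : Type*}
    [NormedAddCommGroup V] [InnerProductSpace ℝ V] [CompleteSpace V]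
    [NormedAddCommGroup H₀] [InnerProductSpace ℝ H₀]
    (ι : V →L[ℝ] H₀)
    (aForm : V →ₗ[ℝ] V →ₗ[ℝ] ℝ)
    (hcoer : ∃ α > 0, ∀ u : V, α * ‖u‖ ^ 2 ≤ aForm u u)
    (hbdd : ∃ β > 0, ∀ u w : V, |aForm u w| ≤ β * ‖u‖ * ‖w‖)
    (φ : Fin N → V) (hφ : outerProdI ι φ φ = 1) :
    ∀ k ℓ : Fin N, k ≤ ℓ →
      ∃! ψ : Fin N → V,
        (∀ η : Fin N → V, outerProdI ι η φ + outerProdI ι φ η = 0 →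
          (∑ j, aForm (ψ j) (η j)) = 0) ∧
        (∀ i j : Fin N, i ≤ j →
          innerHI ι ψ (smulMat φ (SijMat i j)) =
            (if i = k then (1 : ℝ) else 0) * (if j = ℓ then (1 : ℝ) else 0)) := by
  intro k ℓ hkl
  obtain ⟨β, -, hβ⟩ := hbdd
  let A : V →L[ℝ] V →L[ℝ] ℝ := aForm.mkContinuous₂ β hβ
  have hA : IsCoercive A := by
    obtain ⟨α, hα, h⟩ := hcoer
    exact ⟨α, hα, fun u => by simpa [A, sq, mul_assoc] using h u⟩
  have := (isClosed_tangentSpace ι φ).completeSpace_coe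
  refine ((WithLp.equiv 2 _).symm.existsUnique_congr fun ψ => ?_).2
    ((isCoercive_diagBilin hA).existsUnique_sub_mem_forall_apply_eq_zero (tangentSpace ι φ)
      (WithLp.toLp 2 (smulMat φ (SijMat k ℓ))))
  rw [and_comm, forall_innerHI_SijMat_iff_sub_mem_tangentSpace ι hφ hkl,
    (WithLp.equiv 2 _).symm.forall_congr_left]
  simp [mem_tangentSpace_iff, A]

/-- existence and uniqueness of the functions `ψ^{kℓ}` characterized by
`a(ψ^{kℓ}, η) = 0` for all tangent `η` and `(ψ^{kℓ}, φ^{ij})_H = δ_{ik} δ_{jℓ}`. -/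
theorem existsUnique_psi_kl {N : ℕ} (hN : 1 ≤ N)
    {V H₀ : Type*}
    [NormedAddCommGroup V] [InnerProductSpace ℝ V] [CompleteSpace V]
    [NormedAddCommGroup H₀] [InnerProductSpace ℝ H₀] [CompleteSpace H₀]
    (ι : V →L[ℝ] H₀) (hι : Function.Injective ι)
    (aForm : V →ₗ[ℝ] V →ₗ[ℝ] ℝ)
    (hsymm : ∀ u w : V, aForm u w = aForm w u)
    (hcoer : ∃ α > 0, ∀ u : V, α * ‖u‖ ^ 2 ≤ aForm u u)
    (hbdd : ∃ β > 0, ∀ u w : V, |aForm u w| ≤ β * ‖u‖ * ‖w‖)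
    (φ : Fin N → V) (hφ : outerProdI ι φ φ = 1) :
    ∀ k ℓ : Fin N, k ≤ ℓ →
      ∃! ψ : Fin N → V,
        (∀ η : Fin N → V, outerProdI ι η φ + outerProdI ι φ η = 0 →
          (∑ j, aForm (ψ j) (η j)) = 0) ∧
        (∀ i j : Fin N, i ≤ j →
          innerHI ι ψ (smulMat φ (SijMat i j)) =
            (if i = k then (1 : ℝ) else 0) * (if j = ℓ then (1 : ℝ) else 0)) :=
  existsUnique_psi_kl_general ι aForm hcoer hbdd φ hφ
end

section
/- Let Tφ := (T(ιφ_1), …, T(ιφ_N)) ∈ Ṽ^N and M := ⟦φ, Tφ⟧ (entries M_{ij} = ⟨ιφ_i, ι T(ιφ_j)⟩), which is invertible. Suppose φ is a critical point, i.e. φ = (Tφ)·M^{-1}, and set Λ := M^{-1}. Then Λ is symmetric, Λ_{ij} = ã(φ_i, φ_j) for all i, j (so ⟦φ, A_φ φ⟧ = ⟦φ, A_φ^{-1} φ⟧^{-1}), and φ solves the eigenvector equation A_φ φ = φ·Λ in weak form: for every j and every v ∈ Ṽ, ã(φ_j, v) = Σ_{k=1}^N Λ_{kj} · ⟨ι φ_k,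 ι v⟩_{H₀}. -/
open scoped RealInnerProductSpace

/-- The tuple `Tφ = (T(ιφ_1), …, T(ιφ_N))`. -/
noncomputable def Tphi {N : ℕ} {V H₀ : Type*} (ι : V → H₀) (T : H₀ → V)
    (φ : Fin N → V) : Fin N → V :=
  fun i => T (ι (φ i))

/-- The matrix `M = ⟦φ, Tφ⟧` with entries `⟨ιφ_i, ι T(ιφ_j)⟩`. -/
noncomputable def Mmat {N : ℕ} {V H₀ : Type*} [NormedAddCommGroup V]
    [NormedAddCommGroup H₀] [InnerProductSpace ℝ H₀] [NormedSpace ℝ V]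
    (ι : V →L[ℝ] H₀) (T : H₀ → V) (φ : Fin N → V) : Matrix (Fin N) (Fin N) ℝ :=
  Matrix.of fun i j => ⟪ι (φ i), ι (T (ι (φ j)))⟫

/-!
Since `ι` is linear, `⟦φ, (Tφ)Λ⟧ = ⟦φ, Tφ⟧ Λ = M Λ`, so the critical point equation together with
`⟦φ, φ⟧ = I` gives `M M⁻¹ = I`, and `M` is invertible. Pairing `φ_j = Σ_i Λ_{ij} T(ιφ_i)` with
`ã(·, v)` and using `ã(T f, v) = ⟨f, ι v⟩` gives the weak eigenvector equation; testing it with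
`v = φ_i` and using orthonormality identifies `Λ_{ij}` with `ã(φ_j, φ_i)`, which is symmetric.
-/

section

variable {N : ℕ} {V H₀ : Type*}

theorem LinearMap.map_smulMat {W : Type*} [AddCommGroup V] [Module ℝ V] [AddCommGroup W]
    [Module ℝ W] (f : V →ₗ[ℝ] W) (v : Fin N → V) (S : Matrix (Fin N) (Fin N) ℝ) (j : Fin N) :
    f (smulMat v S j) = ∑ i, S i j • f (v i) := by
  simp only [smulMat, map_sum, map_smul]

variable [NormedAddCommGroup V] [NormedSpace ℝ V] [NormedAddCommGroup H₀]
  [InnerProductSpace ℝ H₀]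

theorem outerProdI_smulMat_right (ι : V →L[ℝ] H₀) (v w : Fin N → V)
    (S : Matrix (Fin N) (Fin N) ℝ) :
    outerProdI ι v (smulMat w S) = outerProdI ι v w * S := by
  ext i j
  simp only [outerProdI, Matrix.of_apply, Matrix.mul_apply, ← ContinuousLinearMap.coe_coe,
    LinearMap.map_smulMat, inner_sum, inner_smul_right, mul_comm]

theorem Mmat_eq_outerProdI (ι : V →L[ℝ] H₀) (T : H₀ → V) (φ : Fin N → V) :
    Mmat ι T φ = outerProdI ι φ (Tphi ι T φ) :=
  rfl

theorem Mmat_mul_eq_one_of_eq_smulMat {ι : V →L[ℝ] H₀} {T : H₀ → V} {φ : Fin N → V}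
    {Λ : Matrix (Fin N) (Fin N) ℝ} (hφ : outerProdI ι φ φ = 1)
    (hcrit : φ = smulMat (Tphi ι T φ) Λ) :
    Mmat ι T φ * Λ = 1 := by
  conv_rhs => rw [← hφ]; enter [3]; rw [hcrit]
  rw [outerProdI_smulMat_right, ← Mmat_eq_outerProdI]

theorem inner_eq_ite_of_outerProdI_eq_one {ι : V →L[ℝ] H₀} {φ : Fin N → V}
    (hφ : outerProdI ι φ φ = 1) (i j : Fin N) :
    ⟪ι (φ i), ι (φ j)⟫ = if i = j then 1 else 0 := by
  simpa only [outerProdI, Matrix.of_apply, Matrix.one_apply] using congrFun (congrFun hφ i) j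

theorem weak_eigen_of_eq_smulMat (ι : V →L[ℝ] H₀) (aForm : V →ₗ[ℝ] V →ₗ[ℝ] ℝ) (T : H₀ → V)
    (hT : ∀ (f : H₀) (w : V), aForm (T f) w = ⟪f, ι w⟫) (φ : Fin N → V)
    (Λ : Matrix (Fin N) (Fin N) ℝ) (hφ : φ = smulMat (Tphi ι T φ) Λ) (j : Fin N) (v : V) :
    aForm (φ j) v = ∑ k, Λ k j * ⟪ι (φ k), ι v⟫ := by
  conv_lhs => rw [hφ]
  simp only [LinearMap.map_smulMat, LinearMap.sum_apply, LinearMap.smul_apply, Tphi, hT,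
    smul_eq_mul]

theorem entry_eq_of_weak_eigen {ι : V →L[ℝ] H₀} {aForm : V →ₗ[ℝ] V →ₗ[ℝ] ℝ} {φ : Fin N → V}
    (hφ : outerProdI ι φ φ = 1) {Λ : Matrix (Fin N) (Fin N) ℝ}
    (hweak : ∀ (j : Fin N) (v : V), aForm (φ j) v = ∑ k, Λ k j * ⟪ι (φ k), ι v⟫)
    (i j : Fin N) :
    Λ i j = aForm (φ j) (φ i) := by
  simp [hweak, inner_eq_ite_of_outerProdI_eq_one hφ]

end

theorem critical_point_eigenvector_problem_general {N : ℕ}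
    {V H₀ : Type*}
    [NormedAddCommGroup V] [InnerProductSpace ℝ V]
    [NormedAddCommGroup H₀] [InnerProductSpace ℝ H₀]
    (ι : V →L[ℝ] H₀)
    (aForm : V →ₗ[ℝ] V →ₗ[ℝ] ℝ)
    (hsymm : ∀ u w : V, aForm u w = aForm w u)
    (T : H₀ → V) (hT : ∀ (f : H₀) (w : V), aForm (T f) w = ⟪f, ι w⟫)
    (φ : Fin N → V) (hφ : outerProdI ι φ φ = 1)
    (hcrit : φ = smulMat (Tphi (↑ι) T φ) (Mmat ι T φ)⁻¹) :
    IsUnit (Mmat ι T φ).det ∧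
    ((Mmat ι T φ)⁻¹).IsSymm ∧
    (∀ i j : Fin N, (Mmat ι T φ)⁻¹ i j = aForm (φ i) (φ j)) ∧
    (∀ (j : Fin N) (v : V),
      aForm (φ j) v = ∑ k, (Mmat ι T φ)⁻¹ k j * ⟪ι (φ k), ι v⟫) := by
  have hweak := weak_eigen_of_eq_smulMat ι aForm T hT φ _ hcrit
  have hentry : ∀ i j, (Mmat ι T φ)⁻¹ i j = aForm (φ i) (φ j) := fun i j => by
    rw [entry_eq_of_weak_eigen hφ hweak, hsymm]
  refine ⟨Matrix.isUnit_det_of_right_inverse (Mmat_mul_eq_one_of_eq_smulMat hφ hcrit), ?_,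
    hentry, hweak⟩
  ext i j
  rw [Matrix.transpose_apply, hentry, hentry, hsymm]

/-- at a critical point `φ = (Tφ)·M⁻¹`, the matrix `Λ := M⁻¹` is symmetric
with entries `Λ_{ij} = ã(φ_i, φ_j)`, and `φ` solves the nonlinear eigenvector problem
`A_φ φ = φ Λ` in weak form: `ã(φ_j, v) = Σ_k Λ_{kj} ⟨ι φ_k, ι v⟩` for all `v`. -/
theorem critical_point_eigenvector_problem {N : ℕ} (hN : 1 ≤ N)
    {V H₀ : Type*}
    [NormedAddCommGroup V] [InnerProductSpace ℝ V] [CompleteSpace V]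
    [NormedAddCommGroup H₀] [InnerProductSpace ℝ H₀] [CompleteSpace H₀]
    (ι : V →L[ℝ] H₀) (hι : Function.Injective ι) (hdense : DenseRange ι)
    (aForm : V →ₗ[ℝ] V →ₗ[ℝ] ℝ)
    (hsymm : ∀ u w : V, aForm u w = aForm w u)
    (hcoer : ∃ α > 0, ∀ u : V, α * ‖u‖ ^ 2 ≤ aForm u u)
    (hbdd : ∃ β > 0, ∀ u w : V, |aForm u w| ≤ β * ‖u‖ * ‖w‖)
    (T : H₀ → V) (hT : ∀ (f : H₀) (w : V), aForm (T f) w = ⟪f, ι w⟫)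
    (φ : Fin N → V) (hφ : outerProdI ι φ φ = 1)
    (hcrit : φ = smulMat (Tphi (↑ι) T φ) (Mmat ι T φ)⁻¹) :
    IsUnit (Mmat ι T φ).det ∧
    ((Mmat ι T φ)⁻¹).IsSymm ∧
    (∀ i j : Fin N, (Mmat ι T φ)⁻¹ i j = aForm (φ i) (φ j)) ∧
    (∀ (j : Fin N) (v : V),
      aForm (φ j) v = ∑ k, (Mmat ι T φ)⁻¹ k j * ⟪ι (φ k), ι v⟫) :=
  critical_point_eigenvector_problem_general ι aForm hsymm T hT φ hφ hcrit
end
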